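/- Let C ≥ 0 and let g : ℝ → ℝ be differentiable with g'(r) ≥ −C for all r ∈ ℝ, and let v ∈ L²(Ω) be such that g∘v ∈ L²(Ω). Then ∫_Ω B(v)(x) g(v(x)) dx ≥ −2 C E(v). -/

import Mathlib

open MeasureTheory
open scoped ENNReal

/-- The nonlocal operator `B(v)(x) := (J∗1)(x) v(x) − (J∗v)(x)`, where
`(J∗1)(x) = ∫_Ω J(x−y) dy` and `(J∗v)(x) = ∫_Ω J(x−y) v(y) dy`. -/
noncomputable def nonlocalB {d : ℕ} (Ω : Set (EuclideanSpace ℝ (Fin d)))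
    (J : EuclideanSpace ℝ (Fin d) → ℝ) (v : EuclideanSpace ℝ (Fin d) → ℝ)
    (x : EuclideanSpace ℝ (Fin d)) : ℝ :=
  (∫ y in Ω, J (x - y)) * v x - ∫ y in Ω, J (x - y) * v y

/-- The nonlocal energy `E(v) := (1/4) ∫_Ω ∫_Ω J(x−y)(v(x)−v(y))² dx dy`. -/
noncomputable def nonlocalE {d : ℕ} (Ω : Set (EuclideanSpace ℝ (Fin d)))
    (J : EuclideanSpace ℝ (Fin d) → ℝ) (v : EuclideanSpace ℝ (Fin d) → ℝ) : ℝ :=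
  (1 / 4) * ∫ x in Ω, ∫ y in Ω, J (x - y) * (v x - v y) ^ 2

/-! Fubini turns `∫_Ω B(v) g(v)` into `∬_{Ω×Ω} J(x-y) (v x - v y) g(v x)`, and since `J` is even,
swapping `x` and `y` shows that this is `½ ∬ J(x-y) (v x - v y) (g(v x) - g(v y))`. The mean value
theorem gives `(r - s)(g r - g s) ≥ -C (r - s)²`, so against `J ≥ 0` the double integral is at least
`-(C/2) ∬ J(x-y) (v x - v y)² = -2 C E(v)`.

Integrability over `Ω × Ω` comes from `|ab| ≤ (a² + b²)/2`, which reduces every integrand to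
`J(x-y) w(x)` or `J(x-y) w(y)` with `w ∈ L¹(Ω)`: a convolution integrand. -/

lemma integrable_mul_mul_of_integrable_mul_sq {α : Type*} [MeasurableSpace α] {μ : Measure α}
    {k a b : α → ℝ} (hk : 0 ≤ k) (hka : Integrable (fun x => k x * a x ^ 2) μ)
    (hkb : Integrable (fun x => k x * b x ^ 2) μ)
    (hmeas : AEStronglyMeasurable (fun x => k x * (a x * b x)) μ) :
    Integrable (fun x => k x * (a x * b x)) μ := by
  refine ((hka.add hkb).div_const 2).mono' hmeas (Filter.Eventually.of_forall fun x => ?_)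
  have hab := two_mul_le_add_sq |a x| |b x|
  rw [sq_abs, sq_abs] at hab
  rw [Real.norm_eq_abs, abs_mul, abs_of_nonneg (hk x), abs_mul, Pi.add_apply]
  nlinarith [mul_le_mul_of_nonneg_left hab (hk x)]

lemma neg_mul_sq_le_sub_mul_sub_of_le_deriv {C : ℝ} {g : ℝ → ℝ} (hg : Differentiable ℝ g)
    (hg' : ∀ r, -C ≤ deriv g r) (r s : ℝ) :
    -C * (r - s) ^ 2 ≤ (r - s) * (g r - g s) := by
  rcases le_total r s with h | h
  · nlinarith [mul_sub_le_image_sub_of_le_deriv hg hg' h]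
  · nlinarith [mul_sub_le_image_sub_of_le_deriv hg hg' h]

section Kernel

variable {G : Type*} [MeasurableSpace G] [AddGroup G] [MeasurableAdd₂ G] [MeasurableNeg G]
  {μ : Measure G} [SFinite μ] [μ.IsAddRightInvariant] {s : Set G} {J : G → ℝ}

lemma aestronglyMeasurable_kernel (hJ : AEStronglyMeasurable J μ) :
    AEStronglyMeasurable (fun p : G × G => J (p.1 - p.2)) ((μ.restrict s).prod (μ.restrict s)) :=
  (hJ.comp_quasiMeasurePreserving (quasiMeasurePreserving_sub_of_right_invariant μ _)).mono_measure
    (Measure.prod_mono Measure.restrict_le_self le_rfl)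

lemma integrable_kernel_mul_snd (hJ : Integrable J μ) {w : G → ℝ}
    (hw : Integrable w (μ.restrict s)) :
    Integrable (fun p : G × G => J (p.1 - p.2) * w p.2) ((μ.restrict s).prod (μ.restrict s)) := by
  simpa [mul_comm] using (hw.convolution_integrand (ContinuousLinearMap.lsmul ℝ ℝ) hJ).mono_measure
    (Measure.prod_mono Measure.restrict_le_self le_rfl)

lemma integrable_kernel_mul_fst (hJ : Integrable J μ) (hJeven : ∀ z, J (-z) = J z) {w : G → ℝ}
    (hw : Integrable w (μ.restrict s)) :
    Integrable (fun p : G × G => J (p.1 - p.2) * w p.1) ((μ.restrict s).prod (μ.restrict s)) := by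
  convert (integrable_kernel_mul_snd hJ hw).swap using 2 with p
  simp [← hJeven (p.1 - p.2)]

lemma integrable_kernel_mul_sub_sq (hJ : Integrable J μ) (hJnonneg : ∀ z, 0 ≤ J z)
    (hJeven : ∀ z, J (-z) = J z) {v : G → ℝ} (hv : MemLp v 2 (μ.restrict s)) :
    Integrable (fun p : G × G => J (p.1 - p.2) * (v p.1 - v p.2) ^ 2)
      ((μ.restrict s).prod (μ.restrict s)) := by
  have hbound := ((integrable_kernel_mul_fst hJ hJeven hv.integrable_sq).add
    (integrable_kernel_mul_snd hJ hv.integrable_sq)).const_mul 2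
  refine hbound.mono' ((aestronglyMeasurable_kernel hJ.1).mul
    ((hv.1.comp_fst.sub hv.1.comp_snd).pow 2)) (Filter.Eventually.of_forall fun p => ?_)
  rw [Real.norm_of_nonneg (mul_nonneg (hJnonneg _) (sq_nonneg _)), Pi.add_apply]
  nlinarith [mul_nonneg (hJnonneg (p.1 - p.2)) (sq_nonneg (v p.1 + v p.2))]

lemma integrable_kernel_mul_mul (hJ : Integrable J μ) (hJnonneg : ∀ z, 0 ≤ J z)
    {a b : G × G → ℝ} (ha : AEStronglyMeasurable a ((μ.restrict s).prod (μ.restrict s)))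
    (hb : AEStronglyMeasurable b ((μ.restrict s).prod (μ.restrict s)))
    (hKa : Integrable (fun p => J (p.1 - p.2) * a p ^ 2) ((μ.restrict s).prod (μ.restrict s)))
    (hKb : Integrable (fun p => J (p.1 - p.2) * b p ^ 2) ((μ.restrict s).prod (μ.restrict s))) :
    Integrable (fun p => J (p.1 - p.2) * (a p * b p)) ((μ.restrict s).prod (μ.restrict s)) :=
  integrable_mul_mul_of_integrable_mul_sq (fun _ => hJnonneg _) hKa hKb
    ((aestronglyMeasurable_kernel hJ.1).mul (ha.mul hb))

lemma integrable_kernel_mul_sub_mul (hJ : Integrable J μ) (hJnonneg : ∀ z, 0 ≤ J z)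
    (hJeven : ∀ z, J (-z) = J z) {v w : G → ℝ} (hv : MemLp v 2 (μ.restrict s))
    (hw : MemLp w 2 (μ.restrict s)) :
    Integrable (fun p : G × G => J (p.1 - p.2) * ((v p.1 - v p.2) * w p.1))
      ((μ.restrict s).prod (μ.restrict s)) :=
  integrable_kernel_mul_mul hJ hJnonneg (hv.1.comp_fst.sub hv.1.comp_snd) hw.1.comp_fst
    (integrable_kernel_mul_sub_sq hJ hJnonneg hJeven hv)
    (integrable_kernel_mul_fst hJ hJeven hw.integrable_sq)

end Kernel

lemma integral_mul_sub_mul_sub_eq_two_mul {α : Type*} [MeasurableSpace α] {μ : Measure α}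
    [SFinite μ] {k : α × α → ℝ} (hk : ∀ p, k p.swap = k p) {a b : α → ℝ}
    (h : Integrable (fun p => k p * ((a p.1 - a p.2) * b p.1)) (μ.prod μ)) :
    ∫ p, k p * ((a p.1 - a p.2) * (b p.1 - b p.2)) ∂μ.prod μ
      = 2 * ∫ p, k p * ((a p.1 - a p.2) * b p.1) ∂μ.prod μ := by
  set f : α × α → ℝ := fun p => k p * ((a p.1 - a p.2) * b p.1)
  have hsplit : ∀ p, k p * ((a p.1 - a p.2) * (b p.1 - b p.2)) = f p + f p.swap := by
    intro p
    simp only [f, Prod.fst_swap, Prod.snd_swap, hk]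
    ring
  simp_rw [hsplit]
  rw [integral_add h (h.swap : Integrable (fun p => f p.swap) _), integral_prod_swap f]
  ring

section Nonlocal

variable {d : ℕ} {Ω : Set (EuclideanSpace ℝ (Fin d))} {J v : EuclideanSpace ℝ (Fin d) → ℝ}

lemma setIntegral_nonlocalB_mul_eq (hJ : Integrable J) (hJnonneg : ∀ z, 0 ≤ J z)
    (hJeven : ∀ z, J (-z) = J z) {w : EuclideanSpace ℝ (Fin d) → ℝ}
    (hv : MemLp v 2 (volume.restrict Ω)) (hw : MemLp w 2 (volume.restrict Ω)) :
    ∫ x in Ω, nonlocalB Ω J v x * w x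
      = ∫ p, J (p.1 - p.2) * ((v p.1 - v p.2) * w p.1)
          ∂(volume.restrict Ω).prod (volume.restrict Ω) := by
  have hw₁ := integrable_kernel_mul_fst hJ hJeven hw.integrable_sq
  have hvw := integrable_kernel_mul_mul hJ hJnonneg hv.1.comp_fst hw.1.comp_fst
    (integrable_kernel_mul_fst hJ hJeven hv.integrable_sq) hw₁
  have hvw' := integrable_kernel_mul_mul hJ hJnonneg hv.1.comp_snd hw.1.comp_fst
    (integrable_kernel_mul_snd hJ hv.integrable_sq) hw₁
  have hpt : ∀ x, nonlocalB Ω J v x * w x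
      = (∫ y in Ω, J (x - y) * (v x * w x)) - ∫ y in Ω, J (x - y) * (v y * w x) := by
    intro x
    simp_rw [← mul_assoc, integral_mul_const, nonlocalB]
    ring
  simp_rw [hpt]
  rw [integral_sub hvw.integral_prod_left hvw'.integral_prod_left, integral_integral hvw,
    integral_integral hvw', ← integral_sub hvw hvw']
  simp_rw [← mul_sub, ← sub_mul]

lemma nonlocalE_eq_integral_prod
    (h : Integrable (fun p => J (p.1 - p.2) * (v p.1 - v p.2) ^ 2)
      ((volume.restrict Ω).prod (volume.restrict Ω))) :
    nonlocalE Ω J v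
      = 1 / 4 * ∫ p, J (p.1 - p.2) * (v p.1 - v p.2) ^ 2
          ∂(volume.restrict Ω).prod (volume.restrict Ω) := by
  rw [nonlocalE, integral_integral h]

end Nonlocal

theorem nonlocalB_semimonotone_test_lower_bound_general
    (d : ℕ) (Ω : Set (EuclideanSpace ℝ (Fin d)))
    (J : EuclideanSpace ℝ (Fin d) → ℝ) (hJint : Integrable J)
    (hJnonneg : ∀ z, 0 ≤ J z) (hJeven : ∀ z, J (-z) = J z)
    (C : ℝ)
    (g : ℝ → ℝ) (hg : Differentiable ℝ g) (hg' : ∀ r : ℝ, -C ≤ deriv g r)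
    (v : EuclideanSpace ℝ (Fin d) → ℝ)
    (hv : MemLp v 2 (volume.restrict Ω))
    (hgv : MemLp (fun x => g (v x)) 2 (volume.restrict Ω)) :
    -2 * C * nonlocalE Ω J v ≤ ∫ x in Ω, nonlocalB Ω J v x * g (v x) := by
  set π := (volume.restrict Ω).prod (volume.restrict Ω)
  have hvv := integrable_kernel_mul_sub_sq hJint hJnonneg hJeven hv
  have hvg : Integrable (fun p => J (p.1 - p.2) * ((v p.1 - v p.2) * (g (v p.1) - g (v p.2)))) π :=
    integrable_kernel_mul_mul hJint hJnonneg (hv.1.comp_fst.sub hv.1.comp_snd)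
      (hgv.1.comp_fst.sub hgv.1.comp_snd) hvv
      (integrable_kernel_mul_sub_sq hJint hJnonneg hJeven hgv)
  calc -2 * C * nonlocalE Ω J v
      = 1 / 2 * ∫ p, -C * (J (p.1 - p.2) * (v p.1 - v p.2) ^ 2) ∂π := by
        rw [nonlocalE_eq_integral_prod hvv, integral_const_mul]
        ring
    _ ≤ 1 / 2 * ∫ p, J (p.1 - p.2) * ((v p.1 - v p.2) * (g (v p.1) - g (v p.2))) ∂π := by
        refine mul_le_mul_of_nonneg_left (integral_mono (hvv.const_mul _) hvg fun p => ?_)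
          (by norm_num)
        have hpt := neg_mul_sq_le_sub_mul_sub_of_le_deriv hg hg' (v p.1) (v p.2)
        linarith [mul_le_mul_of_nonneg_left hpt (hJnonneg (p.1 - p.2))]
    _ = ∫ p, J (p.1 - p.2) * ((v p.1 - v p.2) * g (v p.1)) ∂π := by
        rw [integral_mul_sub_mul_sub_eq_two_mul (fun p => by simp [← hJeven (p.1 - p.2)])
          (integrable_kernel_mul_sub_mul hJint hJnonneg hJeven hv hgv)]
        ring
    _ = ∫ x in Ω, nonlocalB Ω J v x * g (v x) :=
        (setIntegral_nonlocalB_mul_eq hJint hJnonneg hJeven hv hgv).symm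

/-- Let `Ω ⊆ ℝ^d` be measurable of finite measure and let `J` be
integrable, nonnegative, and even.  Let `C ≥ 0` and let `g : ℝ → ℝ` be differentiable
with `g'(r) ≥ −C` for all `r`, and let `v ∈ L²(Ω)` be such that `g∘v ∈ L²(Ω)`.  Then
`∫_Ω B(v)(x) g(v(x)) dx ≥ −2 C E(v)`. -/
theorem nonlocalB_semimonotone_test_lower_bound
    (d : ℕ) (hd : 1 ≤ d) (Ω : Set (EuclideanSpace ℝ (Fin d)))
    (hΩmeas : MeasurableSet Ω) (hΩfin : volume Ω < ⊤)
    (J : EuclideanSpace ℝ (Fin d) → ℝ) (hJint : Integrable J)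
    (hJnonneg : ∀ z, 0 ≤ J z) (hJeven : ∀ z, J (-z) = J z)
    (C : ℝ) (hC : 0 ≤ C)
    (g : ℝ → ℝ) (hg : Differentiable ℝ g) (hg' : ∀ r : ℝ, -C ≤ deriv g r)
    (v : EuclideanSpace ℝ (Fin d) → ℝ)
    (hv : MemLp v 2 (volume.restrict Ω))
    (hgv : MemLp (fun x => g (v x)) 2 (volume.restrict Ω)) :
    -2 * C * nonlocalE Ω J v ≤ ∫ x in Ω, nonlocalB Ω J v x * g (v x) :=
  nonlocalB_semimonotone_test_lower_bound_general d Ω J hJint hJnonneg hJeven C g hg hg' v hv hgv
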